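/- Let α = 1/3. There exists a constant C > 0 such that for every integer M ≥ 1 and every real u with 0 ≤ u ≤ M^{1/3}: u³ ∫_0^{M^{1/3}} ⌊t³⌋ / (t²(t² + u² + ut√2)) dt ≥ C u³ log(M^{1/3} / max(u,1)). -/

import Mathlib

open MeasureTheory intervalIntegral Real

private lemma aux_lb (u T : ℝ) (hu : 0 ≤ u) (hT : 1 ≤ T) (huT : u ≤ T) :
    (1/8 : ℝ) * Real.log (T / max u 1) ≤
      ∫ x in (0:ℝ)..T, ((⌊x ^ (3 : ℕ)⌋ : ℤ) : ℝ) /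
        (x ^ 2 * (x ^ 2 + u ^ 2 + u * x * Real.sqrt 2)) := by
  set f : ℝ → ℝ := fun x => ((⌊x ^ (3 : ℕ)⌋ : ℤ) : ℝ) /
      (x ^ 2 * (x ^ 2 + u ^ 2 + u * x * Real.sqrt 2)) with hf
  set m : ℝ := max u 1 with hm
  have hm1 : (1:ℝ) ≤ m := le_max_right _ _
  have hm0 : (0:ℝ) ≤ m := by linarith
  have hmT : m ≤ T := max_le huT hT
  have hs2 : (0:ℝ) ≤ Real.sqrt 2 := Real.sqrt_nonneg 2
  have hs2' : Real.sqrt 2 ≤ 2 := by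
    nlinarith [Real.sq_sqrt (by norm_num : (2:ℝ) ≥ 0)]
  -- nonnegativity of f for x ≥ 0
  have hnn : ∀ x : ℝ, 0 ≤ x → 0 ≤ f x := by
    intro x hx
    apply div_nonneg
    · exact_mod_cast Int.floor_nonneg.2 (by positivity)
    · positivity
  -- measurability
  have hmeas : Measurable f := by
    apply Measurable.div
    · exact measurable_from_top.comp (Int.measurable_floor.comp (measurable_id.pow_const 3))
    · fun_prop
  -- bound
  have hbd : ∀ x ∈ Set.Icc (0:ℝ) T, ‖f x‖ ≤ 1 := by
    intro x hx
    rcases lt_or_ge x 1 with h1 | h1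
    · have h0 : ⌊x ^ (3:ℕ)⌋ = 0 := by
        rw [Int.floor_eq_zero_iff, Set.mem_Ico]
        exact ⟨pow_nonneg hx.1 3, pow_lt_one₀ hx.1 h1 (by norm_num)⟩
      simp [hf, h0]
    · have hxpos : (0:ℝ) < x := by linarith
      have hfle : f x ≤ 1 := by
        have hden : x ^ 4 ≤ x ^ 2 * (x ^ 2 + u ^ 2 + u * x * Real.sqrt 2) := by
          nlinarith [sq_nonneg u, mul_nonneg (mul_nonneg hu hxpos.le) hs2]
        have hnum : ((⌊x ^ (3:ℕ)⌋ : ℤ) : ℝ) ≤ x ^ 3 := Int.floor_le _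
        have hnum0 : (0:ℝ) ≤ x ^ 3 := by positivity
        have := div_le_div₀ hnum0 hnum (by positivity : (0:ℝ) < x ^ 4) hden
        calc f x ≤ x ^ 3 / x ^ 4 := this
          _ = 1 / x := by field_simp
          _ ≤ 1 := by rw [div_le_one hxpos]; exact h1
      rw [Real.norm_eq_abs, abs_of_nonneg (hnn x hx.1)]
      exact hfle
  -- interval integrability
  have hint0T : IntervalIntegrable f volume 0 T := by
    rw [intervalIntegrable_iff]
    apply Measure.integrableOn_of_bounded (M := 1) measure_Ioc_lt_top.ne
      hmeas.aestronglyMeasurable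
    filter_upwards [ae_restrict_mem measurableSet_uIoc] with x hx
    apply hbd
    rcases Set.mem_uIoc.1 hx with h | h
    · exact ⟨h.1.le, h.2⟩
    · exact absurd h.1 (by simp [not_lt]; linarith)
  have hIcc : Set.uIcc (0:ℝ) T = Set.Icc 0 T := Set.uIcc_of_le (by linarith)
  have hint0m : IntervalIntegrable f volume 0 m :=
    hint0T.mono_set (Set.uIcc_subset_uIcc
      (by rw [hIcc]; exact Set.mem_Icc.2 ⟨le_refl 0, by linarith⟩)
      (by rw [hIcc]; exact Set.mem_Icc.2 ⟨hm0, hmT⟩))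
  have hintmT : IntervalIntegrable f volume m T :=
    hint0T.mono_set (Set.uIcc_subset_uIcc
      (by rw [hIcc]; exact Set.mem_Icc.2 ⟨hm0, hmT⟩)
      (by rw [hIcc]; exact Set.mem_Icc.2 ⟨by linarith, le_refl T⟩))
  have hsplit := integral_add_adjacent_intervals hint0m hintmT
  have h1 : 0 ≤ ∫ x in (0:ℝ)..m, f x :=
    integral_nonneg hm0 (fun x hx => hnn x hx.1)
  -- pointwise comparison on [m, T]
  have hg : IntervalIntegrable (fun x : ℝ => 1 / (8 * x)) volume m T := by
    apply ContinuousOn.intervalIntegrable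
    apply ContinuousOn.div continuousOn_const (by fun_prop)
    intro x hx
    rw [Set.uIcc_of_le hmT] at hx
    have : (1:ℝ) ≤ x := le_trans hm1 hx.1
    positivity
  have hcmp : ∀ x ∈ Set.Icc m T, 1 / (8 * x) ≤ f x := by
    intro x hx
    have hx1 : (1:ℝ) ≤ x := le_trans hm1 hx.1
    have hxu : u ≤ x := le_trans (le_max_left u 1) hx.1
    have hxpos : (0:ℝ) < x := by linarith
    have hden_pos : (0:ℝ) < x ^ 2 * (x ^ 2 + u ^ 2 + u * x * Real.sqrt 2) := by
      have : (0:ℝ) < x ^ 2 + u ^ 2 + u * x * Real.sqrt 2 := by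
        nlinarith [sq_nonneg u, mul_nonneg (mul_nonneg hu hxpos.le) hs2]
      positivity
    have hux : u * x * Real.sqrt 2 ≤ 2 * x ^ 2 := by
      have h := mul_le_mul_of_nonneg_left hs2' (mul_nonneg hu hxpos.le)
      nlinarith
    have hu2 : u ^ 2 ≤ x ^ 2 := by nlinarith
    have hden_le : x ^ 2 * (x ^ 2 + u ^ 2 + u * x * Real.sqrt 2) ≤ 4 * x ^ 4 := by
      nlinarith [mul_le_mul_of_nonneg_left (add_le_add hu2 hux) (sq_nonneg x)]
    have hfloor : x ^ 3 / 2 ≤ ((⌊x ^ (3:ℕ)⌋ : ℤ) : ℝ) := by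
      rcases le_or_gt (x ^ 3) 2 with h | h
      · have : (1:ℤ) ≤ ⌊x ^ (3:ℕ)⌋ := by
          rw [Int.le_floor]
          push_cast
          nlinarith
        have : (1:ℝ) ≤ ((⌊x ^ (3:ℕ)⌋ : ℤ) : ℝ) := by exact_mod_cast this
        linarith
      · have := Int.sub_one_lt_floor (x ^ (3:ℕ))
        push_cast at this ⊢
        linarith
    have hkey := div_le_div₀ (by positivity : (0:ℝ) ≤ ((⌊x ^ (3:ℕ)⌋ : ℤ) : ℝ))
      hfloor hden_pos hden_le
    calc 1 / (8 * x) = (x ^ 3 / 2) / (4 * x ^ 4) := by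
          field_simp; ring
      _ ≤ f x := hkey
  have h2 : ∫ x in m..T, 1 / (8 * x) ≤ ∫ x in m..T, f x :=
    integral_mono_on hmT hg hintmT hcmp
  have h3 : ∫ x in m..T, 1 / (8 * x) = (1/8 : ℝ) * Real.log (T / m) := by
    have : ∀ x : ℝ, 1 / (8 * x) = (1/8 : ℝ) * (1 / x) := by
      intro x; field_simp
    simp_rw [this]
    rw [intervalIntegral.integral_const_mul, integral_one_div]
    intro h
    rw [Set.uIcc_of_le hmT] at h
    linarith [h.1]
  calc (1/8 : ℝ) * Real.log (T / m) = ∫ x in m..T, 1 / (8 * x) := h3.symm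
    _ ≤ ∫ x in m..T, f x := h2
    _ ≤ (∫ x in (0:ℝ)..m, f x) + ∫ x in m..T, f x := by linarith
    _ = ∫ x in (0:ℝ)..T, f x := hsplit

theorem lower_bound_integral_third :
    ∃ C : ℝ, 0 < C ∧
      ∀ M : ℕ, 1 ≤ M → ∀ u : ℝ, 0 ≤ u → u ≤ (M : ℝ) ^ ((1 : ℝ) / 3) →
        C * u ^ 3 * Real.log ((M : ℝ) ^ ((1 : ℝ) / 3) / max u 1) ≤
          u ^ 3 * ∫ x in (0 : ℝ)..((M : ℝ) ^ ((1 : ℝ) / 3)),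
            ((⌊x ^ (3 : ℕ)⌋ : ℤ) : ℝ) /
              (x ^ 2 * (x ^ 2 + u ^ 2 + u * x * Real.sqrt 2)) := by
  refine ⟨1/8, by norm_num, ?_⟩
  intro M hM u hu huT
  have hT : (1:ℝ) ≤ (M : ℝ) ^ ((1 : ℝ) / 3) := by
    apply Real.one_le_rpow (by exact_mod_cast hM) (by norm_num)
  have key := aux_lb u _ hu hT huT
  have hu3 : (0:ℝ) ≤ u ^ 3 := by positivity
  calc (1/8 : ℝ) * u ^ 3 * Real.log ((M : ℝ) ^ ((1 : ℝ) / 3) / max u 1)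
      = u ^ 3 * ((1/8 : ℝ) * Real.log ((M : ℝ) ^ ((1 : ℝ) / 3) / max u 1)) := by ring
    _ ≤ _ := mul_le_mul_of_nonneg_left key hu3
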